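/- arXiv:1812.01953 — 2 statements merged into one kernel-verified Lean document; each statement's English description precedes it below -/
import Mathlib

section
/- For every λ > 0, the maximal solution α of α'' = W'(α) with α(0) = λ, α'(0) = 0 is even, is defined exactly on the open interval (−l(λ), l(λ)) where l(λ) = ∫₀^∞ ds/√(2(W(s+λ) − W(λ))), and α : [0, l(λ)) → [λ, ∞) is strictly increasing and onto (in particular α(x) → ∞ as x → l(λ)⁻). -/
/-!
Conservation of energy, `α'² = 2 (W α - W λ)`, says that the solution spends time
`du / √(2 (W u - W λ))` crossing the height interval `[u, u + du]`. So on `x ≥ 0` the solution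
is the inverse of the travel time `a ↦ ∫_λ^a du / √(2 (W u - W λ))`, and it is extended
evenly.
Convexity together with `W 0 = 0` makes `W u / u` nondecreasing, hence `W u - W λ` grows at least
linearly near `λ` (an integrable `(u - λ)^(-1/2)` singularity) and is comparable to `W u` at
infinity, so the total travel time `l(λ)` is finite and the solution blows up there. At `x = 0`
the inverse-function formulas degenerate; there both derivatives are recovered from the
continuity of the candidate derivatives.
-/

open MeasureTheory Set Filter Topology Function

theorem hasDerivAt_of_eventually_hasDerivAt_of_ne {f g : ℝ → ℝ} {x : ℝ}
    (f_diff : ∀ᶠ y in 𝓝[≠] x, HasDerivAt f (g y) y) (hf : ContinuousAt f x)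
    (hg : ContinuousAt g x) : HasDerivAt f (g x) x := by
  have hs : {y | HasDerivAt f (g y) y} ∈ 𝓝[≠] x := f_diff
  have f_diffOn : DifferentiableOn ℝ f {y | HasDerivAt f (g y) y} :=
    fun y hy => hy.differentiableAt.differentiableWithinAt
  have lim : Tendsto (deriv f) (𝓝[≠] x) (𝓝 (g x)) :=
    (hg.tendsto.mono_left nhdsWithin_le_nhds).congr' (f_diff.mono fun y hy => hy.deriv.symm)
  have hright := hasDerivWithinAt_Ici_of_tendsto_deriv f_diffOn hf.continuousWithinAt
    (nhdsWithin_mono _ (fun y hy => ne_of_gt hy) hs)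
    (lim.mono_left (nhdsWithin_mono _ fun y hy => ne_of_gt hy))
  have hleft := hasDerivWithinAt_Iic_of_tendsto_deriv f_diffOn hf.continuousWithinAt
    (nhdsWithin_mono _ (fun y hy => ne_of_lt hy) hs)
    (lim.mono_left (nhdsWithin_mono _ fun y hy => ne_of_lt hy))
  simpa using hleft.union hright

theorem eventually_sign_eq {x : ℝ} (hx : x ≠ 0) :
    ∀ᶠ y in 𝓝 x, SignType.sign y = SignType.sign x :=
  continuousAt_sign_of_ne_zero hx (isOpen_discrete {SignType.sign x} |>.mem_nhds rfl)

theorem hasDerivAt_sign_mul_comp_abs {g : ℝ → ℝ} {g' x : ℝ} (hx : x ≠ 0)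
    (hg : HasDerivAt g g' |x|) : HasDerivAt (fun y => SignType.sign y * g |y|) g' x := by
  have hsign : HasDerivAt (fun y => (SignType.sign y : ℝ)) 0 x :=
    (hasDerivAt_const x (SignType.sign x : ℝ)).congr_of_eventuallyEq
      ((eventually_sign_eq hx).mono fun y hy => congrArg _ hy)
  refine (hsign.mul (hg.comp x (hasDerivAt_abs hx))).congr_deriv ?_
  rcases hx.lt_or_gt with h | h <;> simp [h]

theorem hasDerivAt_sqrt_two_mul_sub_comp {W g : ℝ → ℝ} {c w y : ℝ}
    (hg : HasDerivAt g √(2 * (W (g y) - c)) y) (hW : HasDerivAt W w (g y)) (hc : c < W (g y)) :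
    HasDerivAt (fun z => √(2 * (W (g z) - c))) w y := by
  have hpos : 0 < √(2 * (W (g y) - c)) := Real.sqrt_pos.2 (by linarith)
  refine ((((hW.comp y hg).sub_const c).const_mul 2).sqrt (by positivity)).congr_deriv ?_
  simp only [Function.comp_apply]
  field_simp

theorem setIntegral_Ioi_comp_add_right {E : Type*} [NormedAddCommGroup E] [NormedSpace ℝ E]
    (f : ℝ → E) (a c : ℝ) : ∫ x in Ioi a, f (x + c) = ∫ x in Ioi (a + c), f x := by
  have := (measurePreserving_add_right volume c).setIntegral_preimage_emb
    (measurableEmbedding_addRight c) f (Ioi (a + c))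
  rwa [preimage_add_const_Ioi, add_sub_cancel_right] at this

theorem StrictMonoOn.strictMonoOn_invFunOn {α β : Type*} [LinearOrder α] [Preorder β]
    [Nonempty α] {f : α → β} {s : Set α} (hf : StrictMonoOn f s) :
    StrictMonoOn (invFunOn f s) (f '' s) := by
  rintro _ ⟨x, hx, rfl⟩ _ ⟨y, hy, rfl⟩ hxy
  rwa [hf.injOn.leftInvOn_invFunOn hx, hf.injOn.leftInvOn_invFunOn hy, ← hf.lt_iff_lt hx hy]

section MonotoneOntoIci

variable {g : ℝ → ℝ} {a L : ℝ}

theorem MonotoneOn.apply_zero_of_image_Ico_eq_Ici (hg : MonotoneOn g (Ico 0 L))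
    (himg : g '' Ico 0 L = Ici a) : g 0 = a := by
  obtain ⟨y, hy, hya⟩ : a ∈ g '' Ico 0 L := himg ▸ mem_Ici.2 le_rfl
  have h0 : (0 : ℝ) ∈ Ico 0 L := ⟨le_rfl, hy.1.trans_lt hy.2⟩
  have hg0 : g 0 ∈ Ici a := himg ▸ mem_image_of_mem g h0
  exact le_antisymm (hya ▸ hg h0 hy hy.1) hg0

theorem MonotoneOn.continuousWithinAt_zero_of_image_Ico_eq_Ici (hg : MonotoneOn g (Ico 0 L))
    (himg : g '' Ico 0 L = Ici a) : ContinuousWithinAt g (Ici 0) 0 := by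
  obtain ⟨y, hy, -⟩ : a ∈ g '' Ico 0 L := himg ▸ mem_Ici.2 le_rfl
  refine continuousWithinAt_right_of_monotoneOn_of_image_mem_nhdsWithin hg
    (Ico_mem_nhdsGE (hy.1.trans_lt hy.2)) ?_
  rw [himg, hg.apply_zero_of_image_Ico_eq_Ici himg]
  exact self_mem_nhdsWithin

theorem StrictMonoOn.continuousAt_of_image_Ico_eq_Ici (hg : StrictMonoOn g (Ico 0 L))
    (himg : g '' Ico 0 L = Ici a) {y : ℝ} (hy : y ∈ Ioo 0 L) : ContinuousAt g y := by
  have hga : a < g y := hg.monotoneOn.apply_zero_of_image_Ico_eq_Ici himg ▸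
    hg ⟨le_rfl, hy.1.trans hy.2⟩ (Ioo_subset_Ico_self hy) hy.1
  exact continuousAt_of_monotoneOn_of_image_mem_nhds hg.monotoneOn (Ico_mem_nhds hy.1 hy.2)
    (himg ▸ Ici_mem_nhds hga)

theorem MonotoneOn.tendsto_nhdsLT_atTop_of_image_Ico_eq_Ici (hg : MonotoneOn g (Ico 0 L))
    (himg : g '' Ico 0 L = Ici a) : Tendsto g (𝓝[<] L) atTop := by
  refine tendsto_atTop.2 fun b => ?_
  obtain ⟨y, hy, hyb⟩ : max b a ∈ g '' Ico 0 L := himg ▸ le_max_right b a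
  filter_upwards [Ioo_mem_nhdsLT hy.2] with z hz
  exact (le_max_left b a).trans (hyb ▸ hg hy ⟨hy.1.trans hz.1.le, hz.2⟩ hz.1.le)

end MonotoneOntoIci

section PrimitiveInverse

variable {h : ℝ → ℝ} {a : ℝ}

theorem MeasureTheory.IntegrableOn.intervalIntegrable_of_Ioi (hint : IntegrableOn h (Ioi a))
    {x y : ℝ} (hx : a ≤ x) (hy : a ≤ y) : IntervalIntegrable h volume x y :=
  ((integrableOn_Ici_iff_integrableOn_Ioi).2 hint |>.mono_set
    fun _ ht => (le_min hx hy).trans ht.1).intervalIntegrable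

theorem strictMonoOn_primitive (hint : IntegrableOn h (Ioi a)) (hpos : ∀ x, a < x → 0 < h x) :
    StrictMonoOn (fun x => ∫ t in a..x, h t) (Ici a) := by
  intro x hx y hy hxy
  have hadd := intervalIntegral.integral_add_adjacent_intervals
    (hint.intervalIntegrable_of_Ioi le_rfl hx) (hint.intervalIntegrable_of_Ioi hx hy)
  have := intervalIntegral.intervalIntegral_pos_of_pos_on (hint.intervalIntegrable_of_Ioi hx hy)
    (fun t ht => hpos t (lt_of_le_of_lt hx ht.1)) hxy
  change ∫ t in a..x, h t < ∫ t in a..y, h t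
  linarith

theorem image_primitive_Ici (hint : IntegrableOn h (Ioi a)) (hpos : ∀ x, a < x → 0 < h x) :
    (fun x => ∫ t in a..x, h t) '' Ici a = Ico 0 (∫ t in Ioi a, h t) := by
  have hmono := strictMonoOn_primitive hint hpos
  have hlim := intervalIntegral_tendsto_integral_Ioi a hint tendsto_id
  have hnonneg : ∀ x ∈ Ici a, 0 ≤ ∫ t in a..x, h t := fun x hx => by
    simpa using hmono.monotoneOn (mem_Ici.2 le_rfl) hx hx
  apply Subset.antisymm
  · rintro _ ⟨x, hx, rfl⟩
    refine ⟨hnonneg x hx, (hmono hx (hx.trans (lt_add_one x).le) (lt_add_one x)).trans_le ?_⟩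
    exact ge_of_tendsto hlim (eventually_atTop.2 ⟨x + 1, fun y hy =>
      hmono.monotoneOn (hx.trans (lt_add_one x).le) (hx.trans ((lt_add_one x).le.trans hy)) hy⟩)
  · rintro y ⟨hy0, hyL⟩
    obtain ⟨b, hyb, hab⟩ :=
      ((hlim.eventually (eventually_gt_nhds hyL)).and (eventually_ge_atTop a)).exists
    have hcont := intervalIntegral.continuousOn_primitive_interval'
      (hint.intervalIntegrable_of_Ioi le_rfl hab) left_mem_uIcc
    rw [uIcc_of_le hab] at hcont
    obtain ⟨x, hx, rfl⟩ := intermediate_value_Icc hab hcont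
      ⟨by simpa using hy0, hyb.le⟩
    exact ⟨x, hx.1, rfl⟩

theorem strictMonoOn_invFunOn_primitive (hint : IntegrableOn h (Ioi a))
    (hpos : ∀ x, a < x → 0 < h x) :
    StrictMonoOn (invFunOn (fun x => ∫ t in a..x, h t) (Ici a)) (Ico 0 (∫ t in Ioi a, h t)) :=
  image_primitive_Ici hint hpos ▸ (strictMonoOn_primitive hint hpos).strictMonoOn_invFunOn

theorem image_invFunOn_primitive (hint : IntegrableOn h (Ioi a))
    (hpos : ∀ x, a < x → 0 < h x) :
    invFunOn (fun x => ∫ t in a..x, h t) (Ici a) '' Ico 0 (∫ t in Ioi a, h t) = Ici a := by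
  rw [← image_primitive_Ici hint hpos]
  exact (strictMonoOn_primitive hint hpos).injOn.invFunOn_image Subset.rfl

theorem hasDerivAt_invFunOn_primitive (hint : IntegrableOn h (Ioi a))
    (hpos : ∀ x, a < x → 0 < h x) (hcont : ContinuousOn h (Ioi a)) {y : ℝ}
    (hy : y ∈ Ioo 0 (∫ t in Ioi a, h t)) :
    HasDerivAt (invFunOn (fun x => ∫ t in a..x, h t) (Ici a))
      (h (invFunOn (fun x => ∫ t in a..x, h t) (Ici a) y))⁻¹ y := by
  set F := fun x => ∫ t in a..x, h t
  set G := invFunOn F (Ici a)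
  have hmono := strictMonoOn_invFunOn_primitive hint hpos
  have himg := image_invFunOn_primitive hint hpos
  have hGy : a < G y := hmono.monotoneOn.apply_zero_of_image_Ico_eq_Ici himg ▸
    hmono ⟨le_rfl, hy.1.trans hy.2⟩ (Ioo_subset_Ico_self hy) hy.1
  have hF : HasDerivAt F (h (G y)) (G y) :=
    intervalIntegral.integral_hasDerivAt_right (hint.intervalIntegrable_of_Ioi le_rfl hGy.le)
      (hcont.stronglyMeasurableAtFilter isOpen_Ioi _ hGy) (hcont.continuousAt (Ioi_mem_nhds hGy))
  refine hF.of_local_left_inverse (hmono.continuousAt_of_image_Ico_eq_Ici himg hy)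
    (hpos _ hGy).ne' ?_
  filter_upwards [Ico_mem_nhds hy.1 hy.2] with z hz
  have hz' : z ∈ F '' Ici a := image_primitive_Ici hint hpos ▸ hz
  exact invFunOn_eq hz'

end PrimitiveInverse

theorem one_div_sqrt_le_one_div_sqrt {c d : ℝ} (hc : 0 < c) (hcd : c ≤ d) :
    1 / √d ≤ 1 / √c :=
  one_div_le_one_div_of_le (Real.sqrt_pos.2 hc) (Real.sqrt_le_sqrt hcd)

noncomputable def inverseSpeed (W : ℝ → ℝ) (lam u : ℝ) : ℝ := 1 / √(2 * (W u - W lam))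

section InverseSpeed

variable {W : ℝ → ℝ} {lam : ℝ}

theorem inverseSpeed_pos (hWgt : ∀ u, lam < u → W lam < W u) {u : ℝ} (hu : lam < u) :
    0 < inverseSpeed W lam u :=
  one_div_pos.2 (Real.sqrt_pos.2 (by linarith [hWgt u hu]))

theorem continuousOn_inverseSpeed (hWc : Continuous W) (hWgt : ∀ u, lam < u → W lam < W u) :
    ContinuousOn (inverseSpeed W lam) (Ioi lam) :=
  continuousOn_const.div (by fun_prop) fun u hu =>
    (Real.sqrt_pos.2 (by linarith [hWgt u hu])).ne'

theorem ConvexOn.div_le_div_of_map_zero (hconv : ConvexOn ℝ univ W) (hW0 : W 0 = 0) {s t : ℝ}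
    (hs : 0 < s) (hst : s ≤ t) : W s / s ≤ W t / t := by
  simpa [hW0] using
    hconv.secant_mono (mem_univ 0) (mem_univ s) (mem_univ t) hs.ne' (hs.trans_le hst).ne' hst

theorem ConvexOn.div_mul_sub_le_sub (hconv : ConvexOn ℝ univ W) (hW0 : W 0 = 0) (hlam : 0 < lam)
    {u : ℝ} (hu : lam ≤ u) : W lam / lam * (u - lam) ≤ W u - W lam := by
  have h := hconv.div_le_div_of_map_zero hW0 hlam hu
  rw [div_le_div_iff₀ hlam (hlam.trans_le hu)] at h
  rw [div_mul_eq_mul_div, div_le_iff₀ hlam]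
  nlinarith

theorem ConvexOn.apply_lt_apply_of_map_zero (hconv : ConvexOn ℝ univ W) (hW0 : W 0 = 0)
    (hlam : 0 < lam) (hWlam : 0 < W lam) {u : ℝ} (hu : lam < u) : W lam < W u := by
  nlinarith [hconv.div_mul_sub_le_sub hW0 hlam hu.le, div_pos hWlam hlam]

theorem ConvexOn.div_le_sub (hconv : ConvexOn ℝ univ W) (hW0 : W 0 = 0) (hlam : 0 < lam)
    (hWlam : 0 < W lam) {u : ℝ} (hu : lam + 1 ≤ u) : W u / (lam + 1) ≤ W u - W lam := by
  have hu0 : 0 < u := by linarith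
  have hWu : 0 < W u := hWlam.trans (hconv.apply_lt_apply_of_map_zero hW0 hlam hWlam (by linarith))
  have h := hconv.div_le_div_of_map_zero hW0 hlam (by linarith : lam ≤ u)
  rw [div_le_div_iff₀ hlam hu0] at h
  rw [div_le_iff₀ (by linarith)]
  nlinarith [mul_nonneg hWu.le (by linarith : (0 : ℝ) ≤ u - lam - 1)]

theorem integrableOn_inverseSpeed_Ioc (hconv : ConvexOn ℝ univ W) (hW0 : W 0 = 0)
    (hWc : Continuous W) (hlam : 0 < lam) (hWlam : 0 < W lam) :
    IntegrableOn (inverseSpeed W lam) (Ioc lam (lam + 1)) := by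
  set m := W lam / lam
  have hm : 0 < m := div_pos hWlam hlam
  have hrpow : IntegrableOn (fun u => (√(2 * m))⁻¹ * (u - lam) ^ (-(1 / 2) : ℝ))
      (Ioc lam (lam + 1)) := by
    have := (intervalIntegral.intervalIntegrable_rpow' (a := 0) (b := 1)
      (by norm_num : (-1 : ℝ) < -(1 / 2))).comp_sub_right lam
    rw [zero_add, add_comm] at this
    exact ((intervalIntegrable_iff_integrableOn_Ioc_of_le (by linarith)).1 this).const_mul _
  refine hrpow.mono' ((continuousOn_inverseSpeed hWc fun _ =>
    hconv.apply_lt_apply_of_map_zero hW0 hlam hWlam).aestronglyMeasurable measurableSet_Ioi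
    |>.mono_set Ioc_subset_Ioi_self) ?_
  refine (ae_restrict_iff' measurableSet_Ioc).2 (Eventually.of_forall fun u hu => ?_)
  have hul : 0 < u - lam := sub_pos.2 hu.1
  rw [inverseSpeed, Real.norm_of_nonneg (by positivity), Real.rpow_neg hul.le,
    ← Real.sqrt_eq_rpow, ← mul_inv, ← Real.sqrt_mul (by positivity), ← one_div]
  exact one_div_sqrt_le_one_div_sqrt (by positivity)
    (by nlinarith [hconv.div_mul_sub_le_sub hW0 hlam hu.1.le])

theorem integrableOn_inverseSpeed_Ioi_add_one (hconv : ConvexOn ℝ univ W) (hW0 : W 0 = 0)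
    (hWc : Continuous W) (hWint : IntegrableOn (fun u => 1 / √(W u)) (Ioi 1)) (hlam : 0 < lam)
    (hWlam : 0 < W lam) : IntegrableOn (inverseSpeed W lam) (Ioi (lam + 1)) := by
  refine ((hWint.mono_set (Ioi_subset_Ioi (by linarith))).const_mul √((lam + 1) / 2)).mono'
    ((continuousOn_inverseSpeed hWc fun _ =>
      hconv.apply_lt_apply_of_map_zero hW0 hlam hWlam).aestronglyMeasurable measurableSet_Ioi
      |>.mono_set (Ioi_subset_Ioi (by linarith))) ?_
  refine (ae_restrict_iff' measurableSet_Ioi).2 (Eventually.of_forall fun u hu => ?_)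
  have hu : lam + 1 ≤ u := (mem_Ioi.1 hu).le
  have hWu : 0 < W u := hWlam.trans (hconv.apply_lt_apply_of_map_zero hW0 hlam hWlam (by linarith))
  rw [inverseSpeed, Real.norm_of_nonneg (by positivity)]
  calc 1 / √(2 * (W u - W lam)) ≤ 1 / √(2 * (W u / (lam + 1))) :=
        one_div_sqrt_le_one_div_sqrt (by positivity)
          (by linarith [hconv.div_le_sub hW0 hlam hWlam hu])
    _ = √((lam + 1) / 2) * (1 / √(W u)) := by
        rw [show 2 * (W u / (lam + 1)) = W u / ((lam + 1) / 2) by field_simp,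
          Real.sqrt_div' _ (by positivity : (0 : ℝ) ≤ (lam + 1) / 2)]
        field_simp

theorem integrableOn_inverseSpeed (hconv : ConvexOn ℝ univ W) (hW0 : W 0 = 0)
    (hWc : Continuous W) (hWint : IntegrableOn (fun u => 1 / √(W u)) (Ioi 1)) (hlam : 0 < lam)
    (hWlam : 0 < W lam) : IntegrableOn (inverseSpeed W lam) (Ioi lam) := by
  have := (integrableOn_inverseSpeed_Ioc hconv hW0 hWc hlam hWlam).union
    (integrableOn_inverseSpeed_Ioi_add_one hconv hW0 hWc hWint hlam hWlam)
  rwa [Ioc_union_Ioi_eq_Ioi (by linarith)] at this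

end InverseSpeed

noncomputable def escapeTime (W : ℝ → ℝ) (lam : ℝ) : ℝ :=
  ∫ u in Ioi lam, inverseSpeed W lam u

-- Only the values on `Ico 0 (escapeTime W lam)` matter; elsewhere `invFunOn` is a junk value.
noncomputable def travelTimeInv (W : ℝ → ℝ) (lam : ℝ) : ℝ → ℝ :=
  invFunOn (fun a => ∫ u in lam..a, inverseSpeed W lam u) (Ici lam)

noncomputable def evenSolution (W : ℝ → ℝ) (lam x : ℝ) : ℝ := travelTimeInv W lam |x|

noncomputable def evenSolutionDeriv (W : ℝ → ℝ) (lam x : ℝ) : ℝ :=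
  SignType.sign x * √(2 * (W (evenSolution W lam x) - W lam))

section Construction

variable {W : ℝ → ℝ} {lam : ℝ}

theorem strictMonoOn_travelTimeInv (hWgt : ∀ u, lam < u → W lam < W u)
    (hint : IntegrableOn (inverseSpeed W lam) (Ioi lam)) :
    StrictMonoOn (travelTimeInv W lam) (Ico 0 (escapeTime W lam)) :=
  strictMonoOn_invFunOn_primitive hint fun _ => inverseSpeed_pos hWgt

theorem image_travelTimeInv (hWgt : ∀ u, lam < u → W lam < W u)
    (hint : IntegrableOn (inverseSpeed W lam) (Ioi lam)) :
    travelTimeInv W lam '' Ico 0 (escapeTime W lam) = Ici lam :=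
  image_invFunOn_primitive hint fun _ => inverseSpeed_pos hWgt

theorem hasDerivAt_travelTimeInv (hWc : Continuous W) (hWgt : ∀ u, lam < u → W lam < W u)
    (hint : IntegrableOn (inverseSpeed W lam) (Ioi lam)) {y : ℝ}
    (hy : y ∈ Ioo 0 (escapeTime W lam)) :
    HasDerivAt (travelTimeInv W lam) √(2 * (W (travelTimeInv W lam y) - W lam)) y := by
  have := hasDerivAt_invFunOn_primitive hint (fun _ => inverseSpeed_pos hWgt)
    (continuousOn_inverseSpeed hWc hWgt) hy
  rwa [inverseSpeed, one_div, inv_inv] at this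

theorem travelTimeInv_zero (hWgt : ∀ u, lam < u → W lam < W u)
    (hint : IntegrableOn (inverseSpeed W lam) (Ioi lam)) : travelTimeInv W lam 0 = lam :=
  (strictMonoOn_travelTimeInv hWgt hint).monotoneOn.apply_zero_of_image_Ico_eq_Ici
    (image_travelTimeInv hWgt hint)

theorem evenSolution_zero (hWgt : ∀ u, lam < u → W lam < W u)
    (hint : IntegrableOn (inverseSpeed W lam) (Ioi lam)) : evenSolution W lam 0 = lam := by
  rw [evenSolution, abs_zero, travelTimeInv_zero hWgt hint]

theorem hasDerivAt_evenSolution_of_ne_zero (hW : ContDiff ℝ 1 W)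
    (hWgt : ∀ u, lam < u → W lam < W u) (hint : IntegrableOn (inverseSpeed W lam) (Ioi lam))
    {x : ℝ} (hx : x ∈ Ioo (-escapeTime W lam) (escapeTime W lam)) (hx0 : x ≠ 0) :
    HasDerivAt (evenSolution W lam) (evenSolutionDeriv W lam x) x ∧
      HasDerivAt (evenSolutionDeriv W lam) (deriv W (evenSolution W lam x)) x := by
  have hy : |x| ∈ Ioo 0 (escapeTime W lam) := ⟨abs_pos.2 hx0, abs_lt.2 hx⟩
  have hg := hasDerivAt_travelTimeInv hW.continuous hWgt hint hy
  have hgt : W lam < W (travelTimeInv W lam |x|) := by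
    refine hWgt _ (lt_of_eq_of_lt (travelTimeInv_zero hWgt hint).symm ?_)
    exact (strictMonoOn_travelTimeInv hWgt hint) ⟨le_rfl, hy.1.trans hy.2⟩
      (Ioo_subset_Ico_self hy) hy.1
  refine ⟨(hg.comp x (hasDerivAt_abs hx0)).congr_deriv (mul_comm _ _), ?_⟩
  exact hasDerivAt_sign_mul_comp_abs hx0 (hasDerivAt_sqrt_two_mul_sub_comp hg
    ((hW.differentiable one_ne_zero).differentiableAt.hasDerivAt) hgt)

theorem continuousAt_evenSolution_zero (hWgt : ∀ u, lam < u → W lam < W u)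
    (hint : IntegrableOn (inverseSpeed W lam) (Ioi lam)) :
    ContinuousAt (evenSolution W lam) 0 := by
  have h := (strictMonoOn_travelTimeInv hWgt hint).monotoneOn
    |>.continuousWithinAt_zero_of_image_Ico_eq_Ici (image_travelTimeInv hWgt hint)
  exact continuousWithinAt_univ _ _ |>.1 <| h.comp_of_eq continuous_abs.continuousWithinAt
    (fun y _ => abs_nonneg y) abs_zero

theorem continuousAt_evenSolutionDeriv_zero (hWc : Continuous W)
    (hWgt : ∀ u, lam < u → W lam < W u) (hint : IntegrableOn (inverseSpeed W lam) (Ioi lam)) :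
    ContinuousAt (evenSolutionDeriv W lam) 0 := by
  have hspeed :
      Tendsto (fun y => √(2 * (W (evenSolution W lam y) - W lam))) (𝓝 0) (𝓝 0) := by
    have : ContinuousAt (fun y => √(2 * (W (evenSolution W lam y) - W lam))) 0 :=
      (((hWc.continuousAt.comp (continuousAt_evenSolution_zero hWgt hint)).sub
        continuousAt_const).const_mul 2).sqrt
    simpa [evenSolution_zero hWgt hint] using this.tendsto
  refine (squeeze_zero_norm (fun y => ?_) hspeed).trans (by simp [evenSolutionDeriv])
  rw [evenSolutionDeriv, norm_mul, Real.norm_of_nonneg (Real.sqrt_nonneg _)]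
  rcases lt_trichotomy y 0 with h | h | h <;> simp [h]

theorem escapeTime_pos (hWgt : ∀ u, lam < u → W lam < W u)
    (hint : IntegrableOn (inverseSpeed W lam) (Ioi lam)) : 0 < escapeTime W lam := by
  obtain ⟨y, hy, -⟩ : lam ∈ travelTimeInv W lam '' Ico 0 (escapeTime W lam) :=
    image_travelTimeInv hWgt hint ▸ mem_Ici.2 le_rfl
  exact hy.1.trans_lt hy.2

theorem hasDerivAt_evenSolution (hW : ContDiff ℝ 1 W) (hWgt : ∀ u, lam < u → W lam < W u)
    (hint : IntegrableOn (inverseSpeed W lam) (Ioi lam))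
    {x : ℝ} (hx : x ∈ Ioo (-escapeTime W lam) (escapeTime W lam)) :
    HasDerivAt (evenSolution W lam) (evenSolutionDeriv W lam x) x ∧
      HasDerivAt (evenSolutionDeriv W lam) (deriv W (evenSolution W lam x)) x := by
  rcases eq_or_ne x 0 with rfl | hx0
  · have hd : ∀ᶠ y in 𝓝[≠] (0 : ℝ),
        HasDerivAt (evenSolution W lam) (evenSolutionDeriv W lam y) y ∧
          HasDerivAt (evenSolutionDeriv W lam) (deriv W (evenSolution W lam y)) y := by
      filter_upwards [eventually_nhdsWithin_of_eventually_nhds (Ioo_mem_nhds hx.1 hx.2),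
        self_mem_nhdsWithin] with y hy hy0
      exact hasDerivAt_evenSolution_of_ne_zero hW hWgt hint hy hy0
    have hα := continuousAt_evenSolution_zero hWgt hint
    have hα' := continuousAt_evenSolutionDeriv_zero hW.continuous hWgt hint
    exact ⟨hasDerivAt_of_eventually_hasDerivAt_of_ne (hd.mono fun _ => And.left) hα hα',
      hasDerivAt_of_eventually_hasDerivAt_of_ne (hd.mono fun _ => And.right) hα'
        ((hW.continuous_deriv le_rfl).continuousAt.comp hα)⟩
  · exact hasDerivAt_evenSolution_of_ne_zero hW hWgt hint hx hx0

end Construction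

theorem maximal_solution_alpha
    (W : ℝ → ℝ) (hW : ContDiff ℝ 2 W) (hWnn : ∀ t, 0 ≤ W t)
    (hWconv : ConvexOn ℝ Set.univ W) (hWvan : ∀ t, W t = 0 ↔ t = 0)
    (hWint : IntegrableOn (fun u => 1 / Real.sqrt (W u)) {u : ℝ | 1 < u})
    (lam : ℝ) (hlam : 0 < lam) :
    ∃ (l : ℝ) (α α' : ℝ → ℝ),
      l = (∫ s in Ioi (0:ℝ), 1 / Real.sqrt (2 * (W (s + lam) - W lam))) ∧ 0 < l ∧
      (∀ x ∈ Ioo (-l) l, HasDerivAt α (α' x) x ∧ HasDerivAt α' (deriv W (α x)) x) ∧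
      α 0 = lam ∧ α' 0 = 0 ∧
      (∀ x ∈ Ioo (-l) l, α (-x) = α x) ∧
      StrictMonoOn α (Ico 0 l) ∧
      α '' (Ico 0 l) = Ici lam ∧
      Tendsto α (nhdsWithin l (Iio l)) atTop := by
  have hW0 : W 0 = 0 := (hWvan 0).2 rfl
  have hWlam : 0 < W lam := (hWnn lam).lt_of_ne' fun h => hlam.ne' ((hWvan lam).1 h)
  have hWgt : ∀ u, lam < u → W lam < W u := fun _ =>
    hWconv.apply_lt_apply_of_map_zero hW0 hlam hWlam
  have hint := integrableOn_inverseSpeed hWconv hW0 hW.continuous hWint hlam hWlam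
  have hmono := strictMonoOn_travelTimeInv hWgt hint
  have himg := image_travelTimeInv hWgt hint
  have heq : EqOn (evenSolution W lam) (travelTimeInv W lam) (Ico 0 (escapeTime W lam)) :=
    fun x hx => by rw [evenSolution, abs_of_nonneg hx.1]
  have hl : escapeTime W lam = ∫ s in Ioi (0:ℝ), 1 / Real.sqrt (2 * (W (s + lam) - W lam)) := by
    have := setIntegral_Ioi_comp_add_right (inverseSpeed W lam) 0 lam
    rw [zero_add] at this
    exact this.symm
  refine ⟨escapeTime W lam, evenSolution W lam, evenSolutionDeriv W lam, hl,
    escapeTime_pos hWgt hint,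
    fun x hx => hasDerivAt_evenSolution (hW.of_le one_le_two) hWgt hint hx,
    evenSolution_zero hWgt hint, by simp [evenSolutionDeriv], fun x _ => by simp [evenSolution],
    hmono.congr heq.symm, heq.image_eq.trans himg, ?_⟩
  refine (hmono.monotoneOn.tendsto_nhdsLT_atTop_of_image_Ico_eq_Ici himg).congr' ?_
  filter_upwards [Ioo_mem_nhdsLT (escapeTime_pos hWgt hint)] with x hx
  exact (heq ⟨hx.1.le, hx.2⟩).symm
end

section
/- The functions h ↦ l⁺(h) = ∫₀^∞ ds/√(2(W(s)+h)) and h ↦ l⁻(h) = ∫_{−∞}^0 ds/√(2(W(s)+h)) are finite, continuous, strictly decreasing on (0,∞), and tend to 0 as h → ∞ and to ∞ as h → 0⁺. -/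
/-!
For fixed `s`, the integrand `1 / √(2 (W s + h))` is continuous and strictly decreasing in
`h > 0`, tends to `0` as `h → ∞`, and is dominated by `1 / √W` on `|s| > 1`; dominated
convergence gives finiteness, continuity and the limit `0` at infinity. As `h → 0⁺` it increases
to `1 / √(2 W)`, which is not integrable on either side of `0`: `W` is `C²` with a double zero at
its minimum `0`, so `W s ≤ M s²` there. Monotone convergence then makes both integrals blow up.
-/

open MeasureTheory Set Filter Topology

lemma strictAntiOn_one_div_sqrt_two_mul_add (v : ℝ) :
    StrictAntiOn (fun h : ℝ => 1 / √(2 * (v + h))) (Ioi (-v)) := by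
  intro a ha b hb hab
  have ha' : 0 < v + a := by linarith [mem_Ioi.1 ha]
  exact one_div_lt_one_div_of_lt (Real.sqrt_pos.2 (by positivity))
    (Real.sqrt_lt_sqrt (by positivity) (by linarith))

lemma continuousAt_one_div_sqrt_two_mul_add {v h : ℝ} (hvh : 0 < v + h) :
    ContinuousAt (fun h : ℝ => 1 / √(2 * (v + h))) h :=
  continuousAt_const.div (by fun_prop) (Real.sqrt_pos.2 (by positivity)).ne'

lemma tendsto_one_div_sqrt_two_mul_add_atTop (v : ℝ) :
    Tendsto (fun h : ℝ => 1 / √(2 * (v + h))) atTop (𝓝 0) := by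
  simp only [one_div]
  refine (Real.tendsto_sqrt_atTop.comp ?_).inv_tendsto_atTop
  exact (tendsto_atTop_add_const_left _ _ tendsto_id).const_mul_atTop two_pos

lemma one_div_sqrt_two_mul_add_le {v a b : ℝ} (hv : 0 ≤ v) (ha : 0 < a) (hab : a ≤ b) :
    1 / √(2 * (v + b)) ≤ 1 / √(2 * (v + a)) :=
  (strictAntiOn_one_div_sqrt_two_mul_add v).antitoneOn (mem_Ioi.2 (by linarith))
    (mem_Ioi.2 (by linarith)) hab

section
variable {α : Type*} [MeasurableSpace α] {μ : Measure α} {V : α → ℝ}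

lemma continuousOn_integral_one_div_sqrt_two_mul_add (hV : ∀ s, 0 ≤ V s)
    (hint : ∀ h > 0, Integrable (fun s => 1 / √(2 * (V s + h))) μ) :
    ContinuousOn (fun h => ∫ s, 1 / √(2 * (V s + h)) ∂μ) (Ioi 0) := by
  intro h₀ hh₀
  have hh₀' : 0 < h₀ / 2 := half_pos hh₀
  refine tendsto_integral_filter_of_dominated_convergence _ ?meas ?bound (hint _ hh₀') ?lim
  case meas =>
    filter_upwards [self_mem_nhdsWithin] with h hh using (hint h hh).aestronglyMeasurable
  case bound =>
    filter_upwards [nhdsWithin_le_nhds (Ioi_mem_nhds (half_lt_self hh₀))] with h hh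
    refine ae_of_all _ fun s => ?_
    rw [Real.norm_of_nonneg (by positivity)]
    exact one_div_sqrt_two_mul_add_le (hV s) hh₀' hh.out.le
  case lim =>
    exact ae_of_all _ fun s => (continuousAt_one_div_sqrt_two_mul_add
      (by linarith [hV s, mem_Ioi.1 hh₀])).continuousWithinAt

lemma strictAntiOn_integral_one_div_sqrt_two_mul_add (hμ : μ ≠ 0) (hV : ∀ s, 0 ≤ V s)
    (hint : ∀ h > 0, Integrable (fun s => 1 / √(2 * (V s + h))) μ) :
    StrictAntiOn (fun h => ∫ s, 1 / √(2 * (V s + h)) ∂μ) (Ioi 0) := by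
  intro a ha b hb hab
  have hlt : ∀ s, 1 / √(2 * (V s + b)) < 1 / √(2 * (V s + a)) := fun s =>
    strictAntiOn_one_div_sqrt_two_mul_add (V s) (mem_Ioi.2 (by linarith [hV s, mem_Ioi.1 ha]))
      (mem_Ioi.2 (by linarith [hV s, mem_Ioi.1 hb])) hab
  have hpos : 0 < ∫ s, (1 / √(2 * (V s + a)) - 1 / √(2 * (V s + b))) ∂μ := by
    rw [integral_pos_iff_support_of_nonneg_ae (ae_of_all _ fun s => (sub_pos.2 (hlt s)).le)
      ((hint a ha).sub (hint b hb))]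
    have : Function.support (fun s => 1 / √(2 * (V s + a)) - 1 / √(2 * (V s + b))) = univ :=
      eq_univ_of_forall fun s => (sub_pos.2 (hlt s)).ne'
    rw [this]
    exact Measure.measure_univ_pos.2 hμ
  rwa [integral_sub (hint a ha) (hint b hb), sub_pos] at hpos

lemma tendsto_integral_one_div_sqrt_two_mul_add_atTop (hV : ∀ s, 0 ≤ V s)
    (hint : ∀ h > 0, Integrable (fun s => 1 / √(2 * (V s + h))) μ) :
    Tendsto (fun h => ∫ s, 1 / √(2 * (V s + h)) ∂μ) atTop (𝓝 0) := by
  have := tendsto_integral_filter_of_dominated_convergence (μ := μ) (l := atTop) _ ?meas ?bound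
    (hint 1 one_pos) (ae_of_all _ fun s => tendsto_one_div_sqrt_two_mul_add_atTop (V s))
  · simpa only [integral_zero] using this
  case meas =>
    filter_upwards [eventually_gt_atTop 0] with h hh using (hint h hh).aestronglyMeasurable
  case bound =>
    filter_upwards [eventually_ge_atTop 1] with h hh
    refine ae_of_all _ fun s => ?_
    rw [Real.norm_of_nonneg (by positivity)]
    exact one_div_sqrt_two_mul_add_le (hV s) one_pos hh

lemma antitoneOn_integral_one_div_sqrt_two_mul_add (hV : ∀ s, 0 ≤ V s)
    (hint : ∀ h > 0, Integrable (fun s => 1 / √(2 * (V s + h))) μ) :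
    AntitoneOn (fun h => ∫ s, 1 / √(2 * (V s + h)) ∂μ) (Ioi 0) := fun a ha b hb hab =>
  integral_mono (hint b hb) (hint a ha) fun s => one_div_sqrt_two_mul_add_le (hV s) ha hab

lemma tendsto_integral_one_div_sqrt_two_mul_add_nhdsGT (hV : ∀ s, 0 ≤ V s)
    (hVpos : ∀ᵐ s ∂μ, 0 < V s)
    (hint : ∀ h > 0, Integrable (fun s => 1 / √(2 * (V s + h))) μ)
    (hdiv : ¬ Integrable (fun s => 1 / √(2 * V s)) μ) :
    Tendsto (fun h => ∫ s, 1 / √(2 * (V s + h)) ∂μ) (𝓝[>] 0) atTop := by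
  have hpos : ∀ n : ℕ, (0 : ℝ) < 1 / (n + 1) := fun n => Nat.one_div_pos_of_nat
  have hlim : ∀ᵐ s ∂μ, Tendsto (fun n : ℕ => 1 / √(2 * (V s + 1 / (n + 1)))) atTop
      (𝓝 (1 / √(2 * V s))) := by
    -- where `V s = 0` the limit is `+∞`, not the junk value `1 / √0 = 0`
    filter_upwards [hVpos] with s hs
    have := (continuousAt_one_div_sqrt_two_mul_add (v := V s) (h := 0)
      (by rwa [add_zero])).tendsto.comp tendsto_one_div_add_atTop_nhds_zero_nat
    simpa only [Function.comp_def, add_zero] using this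
  have htop : ∫⁻ s, ENNReal.ofReal (1 / √(2 * V s)) ∂μ = ⊤ := by
    by_contra hfin
    refine hdiv ⟨aestronglyMeasurable_of_tendsto_ae _
      (fun n => (hint _ (hpos n)).aestronglyMeasurable) hlim, ?_⟩
    exact (hasFiniteIntegral_iff_ofReal (ae_of_all _ fun s => by positivity)).2
      (lt_top_iff_ne_top.2 hfin)
  have hseq :
      Tendsto (fun n : ℕ => ∫ s, 1 / √(2 * (V s + 1 / (n + 1))) ∂μ) atTop atTop := by
    rw [← ENNReal.tendsto_ofReal_nhds_top, ← htop]
    refine (lintegral_tendsto_of_tendsto_of_monotone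
      (f := fun (n : ℕ) s => ENNReal.ofReal (1 / √(2 * (V s + 1 / (n + 1)))))
      (fun n => ?_) ?_ ?_).congr fun n => ?_
    · exact (hint _ (hpos n)).aemeasurable.ennreal_ofReal
    · refine ae_of_all _ fun s m n hmn => ENNReal.ofReal_le_ofReal ?_
      exact one_div_sqrt_two_mul_add_le (hV s) (hpos n) (Nat.one_div_le_one_div hmn)
    · filter_upwards [hlim] with s hs using (ENNReal.continuous_ofReal.tendsto _).comp hs
    · exact (ofReal_integral_eq_lintegral_ofReal (hint _ (hpos n))
        (ae_of_all _ fun s => by positivity)).symm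
  rw [tendsto_atTop]
  intro C
  obtain ⟨n, hn⟩ := (hseq.eventually_ge_atTop C).exists
  filter_upwards [Ioo_mem_nhdsGT (hpos n)] with h hh
  exact hn.trans (antitoneOn_integral_one_div_sqrt_two_mul_add hV hint hh.1 (hpos n) hh.2.le)

end

lemma exists_abs_sub_le_mul_sq_of_deriv_eq_zero {f : ℝ → ℝ} (hf : ContDiff ℝ 2 f)
    (hd : deriv f 0 = 0) : ∃ M, ∀ s ∈ Icc (-1 : ℝ) 1, |f s - f 0| ≤ M * s ^ 2 := by
  have hf' : ContDiff ℝ 1 (deriv f) := hf.iterate_deriv' 1 1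
  obtain ⟨M, hM⟩ := isCompact_Icc.exists_bound_of_continuousOn
    (hf'.continuous_deriv le_rfl).continuousOn (s := Icc (-1 : ℝ) 1)
  have hM0 : 0 ≤ M := (norm_nonneg _).trans (hM 0 (by norm_num))
  have hderiv : ∀ t ∈ Icc (-1 : ℝ) 1, |deriv f t| ≤ M * |t| := by
    intro t ht
    simpa [hd] using (convex_Icc (-1 : ℝ) 1).norm_image_sub_le_of_norm_deriv_le
      (fun x _ => hf'.differentiable one_ne_zero x) hM
      (show (0 : ℝ) ∈ Icc (-1) 1 by norm_num) ht
  refine ⟨M, fun s hs => ?_⟩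
  have hsub : uIcc 0 s ⊆ Icc (-1 : ℝ) 1 := uIcc_subset_Icc (by norm_num) hs
  have := (convex_uIcc 0 s).norm_image_sub_le_of_norm_deriv_le
    (fun x _ => hf.differentiable two_ne_zero x)
    (fun t ht => (hderiv t (hsub ht)).trans
      (mul_le_mul_of_nonneg_left (by simpa using abs_sub_left_of_mem_uIcc ht) hM0))
    left_mem_uIcc right_mem_uIcc
  simpa [sq, mul_assoc] using this

lemma not_intervalIntegrable_one_div_sqrt_of_le_mul_sq {V : ℝ → ℝ} {M a b : ℝ}
    (hab : a ≠ b) (h0 : (0 : ℝ) ∈ uIcc a b)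
    (hV : ∀ s ∈ uIcc a b, s ≠ 0 → 0 < V s ∧ V s ≤ M * s ^ 2) :
    ¬ IntervalIntegrable (fun s => 1 / √(V s)) volume a b := by
  intro hint
  have hinv : IntervalIntegrable (fun s : ℝ => s⁻¹) volume a b := by
    refine (hint.const_mul √M).mono_fun measurable_inv.aestronglyMeasurable
      (ae_restrict_of_forall_mem measurableSet_uIoc fun s hs => ?_)
    rcases eq_or_ne s 0 with rfl | hs0
    · simp only [inv_zero, norm_zero]; positivity
    obtain ⟨hVs, hVM⟩ := hV s (uIoc_subset_uIcc hs) hs0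
    have hsqrt : √(V s) ≤ √M * |s| := by
      rw [← Real.sqrt_sq_eq_abs, ← Real.sqrt_mul' _ (sq_nonneg s)]
      exact Real.sqrt_le_sqrt hVM
    have hVs' := Real.sqrt_pos.2 hVs
    change ‖s⁻¹‖ ≤ ‖√M * (1 / √(V s))‖
    rw [norm_inv, Real.norm_eq_abs, norm_mul, Real.norm_of_nonneg (Real.sqrt_nonneg _),
      Real.norm_of_nonneg (by positivity), mul_one_div, inv_eq_one_div,
      div_le_div_iff₀ (abs_pos.2 hs0) hVs']
    linarith
  simp only [intervalIntegrable_inv_iff, hab, false_or] at hinv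
  exact hinv h0

lemma integrable_one_div_sqrt_two_mul_add {V : ℝ → ℝ} (hVc : Continuous V)
    (hV : ∀ s, 0 ≤ V s)
    (hVpos : ∀ s ∈ {u : ℝ | 1 < |u|}, 0 < V s)
    (hVint : IntegrableOn (fun u => 1 / √(V u)) {u : ℝ | 1 < |u|}) {h : ℝ} (hh : 0 < h) :
    Integrable (fun s => 1 / √(2 * (V s + h))) := by
  have hcont : Continuous fun s => 1 / √(2 * (V s + h)) :=
    continuous_const.div (by fun_prop) fun s => (Real.sqrt_pos.2 (by linarith [hV s])).ne'
  have hout : IntegrableOn (fun s => 1 / √(2 * (V s + h))) {u : ℝ | 1 < |u|} := by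
    refine hVint.mono' hcont.aestronglyMeasurable
      (ae_restrict_of_forall_mem (measurableSet_lt measurable_const measurable_abs) fun s hs => ?_)
    rw [Real.norm_of_nonneg (by positivity)]
    exact one_div_le_one_div_of_le (Real.sqrt_pos.2 (hVpos s hs))
      (Real.sqrt_le_sqrt (by linarith [hV s]))
  have hcover : Icc (-1) 1 ∪ {u : ℝ | 1 < |u|} = univ := by
    ext u
    simpa only [mem_union, mem_Icc, mem_ofPred_eq, ← abs_le, mem_univ, iff_true] using
      le_or_gt _ _
  rw [← integrableOn_univ, ← hcover]
  exact hcont.integrableOn_Icc.union hout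

lemma not_intervalIntegrable_one_div_sqrt_two_mul {W : ℝ → ℝ} (hW : ContDiff ℝ 2 W)
    (hW0 : W 0 = 0) (hWpos : ∀ t, t ≠ 0 → 0 < W t) {a b : ℝ} (hab : a ≠ b)
    (h0 : (0 : ℝ) ∈ uIcc a b) (hsub : uIcc a b ⊆ Icc (-1) 1) :
    ¬ IntervalIntegrable (fun s => 1 / √(2 * W s)) volume a b := by
  have hmin : IsLocalMin W 0 := Eventually.of_forall fun t => by
    rcases eq_or_ne t 0 with rfl | ht
    · exact le_rfl
    · exact hW0.symm ▸ (hWpos t ht).le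
  obtain ⟨M, hM⟩ := exists_abs_sub_le_mul_sq_of_deriv_eq_zero hW hmin.deriv_eq_zero
  refine not_intervalIntegrable_one_div_sqrt_of_le_mul_sq (M := 2 * M) hab h0 fun s hs hs0 => ?_
  have := (le_abs_self _).trans (hM s (hsub hs))
  constructor <;> linarith [hWpos s hs0]

theorem lplus_lminus_properties_general
    (W : ℝ → ℝ) (hW : ContDiff ℝ 2 W) (hWnn : ∀ t, 0 ≤ W t)
    (hWvan : ∀ t, W t = 0 ↔ t = 0)
    (hWint : IntegrableOn (fun u => 1 / Real.sqrt (W u)) {u : ℝ | 1 < |u|}) :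
    (∀ h : ℝ, 0 < h →
      IntegrableOn (fun s => 1 / Real.sqrt (2 * (W s + h))) (Ioi (0:ℝ)) ∧
      IntegrableOn (fun s => 1 / Real.sqrt (2 * (W s + h))) (Iio (0:ℝ))) ∧
    ContinuousOn (fun h => ∫ s in Ioi (0:ℝ), 1 / Real.sqrt (2 * (W s + h))) (Ioi 0) ∧
    ContinuousOn (fun h => ∫ s in Iio (0:ℝ), 1 / Real.sqrt (2 * (W s + h))) (Ioi 0) ∧
    StrictAntiOn (fun h => ∫ s in Ioi (0:ℝ), 1 / Real.sqrt (2 * (W s + h))) (Ioi 0) ∧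
    StrictAntiOn (fun h => ∫ s in Iio (0:ℝ), 1 / Real.sqrt (2 * (W s + h))) (Ioi 0) ∧
    Tendsto (fun h => ∫ s in Ioi (0:ℝ), 1 / Real.sqrt (2 * (W s + h))) atTop (nhds 0) ∧
    Tendsto (fun h => ∫ s in Iio (0:ℝ), 1 / Real.sqrt (2 * (W s + h))) atTop (nhds 0) ∧
    Tendsto (fun h => ∫ s in Ioi (0:ℝ), 1 / Real.sqrt (2 * (W s + h))) (nhdsWithin 0 (Ioi 0)) atTop ∧
    Tendsto (fun h => ∫ s in Iio (0:ℝ), 1 / Real.sqrt (2 * (W s + h))) (nhdsWithin 0 (Ioi 0)) atTop := by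
  have hW0 : W 0 = 0 := (hWvan 0).2 rfl
  have hWpos : ∀ t, t ≠ 0 → 0 < W t := fun t ht => (hWnn t).lt_of_ne' (by rwa [Ne, hWvan])
  have hint (S : Set ℝ) : ∀ h > 0, IntegrableOn (fun s => 1 / √(2 * (W s + h))) S :=
    fun h hh => (integrable_one_div_sqrt_two_mul_add hW.continuous hWnn
      (fun s hs => hWpos s (by rintro rfl; norm_num at hs)) hWint hh).integrableOn
  have hdivR : ¬ IntegrableOn (fun s => 1 / √(2 * W s)) (Ioi 0) := fun hi =>
    not_intervalIntegrable_one_div_sqrt_two_mul hW hW0 hWpos zero_ne_one left_mem_uIcc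
      (uIcc_subset_Icc (by norm_num) (by norm_num))
      ((intervalIntegrable_iff_integrableOn_Ioc_of_le zero_le_one).2
        (hi.mono_set Ioc_subset_Ioi_self))
  have hdivL : ¬ IntegrableOn (fun s => 1 / √(2 * W s)) (Iio 0) := fun hi =>
    not_intervalIntegrable_one_div_sqrt_two_mul hW hW0 hWpos (a := -1) (by norm_num)
      right_mem_uIcc
      (uIcc_subset_Icc (by norm_num) (by norm_num))
      ((intervalIntegrable_iff_integrableOn_Ioc_of_le (by norm_num)).2
        (((integrableOn_Iic_iff_integrableOn_Iio (by finiteness)).2 hi).mono_set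
          Ioc_subset_Iic_self))
  exact ⟨fun h hh => ⟨hint _ h hh, hint _ h hh⟩,
    continuousOn_integral_one_div_sqrt_two_mul_add hWnn (hint _),
    continuousOn_integral_one_div_sqrt_two_mul_add hWnn (hint _),
    strictAntiOn_integral_one_div_sqrt_two_mul_add (by simp [Measure.restrict_eq_zero]) hWnn
      (hint _),
    strictAntiOn_integral_one_div_sqrt_two_mul_add (by simp [Measure.restrict_eq_zero]) hWnn
      (hint _),
    tendsto_integral_one_div_sqrt_two_mul_add_atTop hWnn (hint _),
    tendsto_integral_one_div_sqrt_two_mul_add_atTop hWnn (hint _),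
    tendsto_integral_one_div_sqrt_two_mul_add_nhdsGT hWnn
      (ae_restrict_of_forall_mem measurableSet_Ioi fun s hs => hWpos s hs.ne') (hint _) hdivR,
    tendsto_integral_one_div_sqrt_two_mul_add_nhdsGT hWnn
      (ae_restrict_of_forall_mem measurableSet_Iio fun s hs => hWpos s hs.ne) (hint _) hdivL⟩

theorem lplus_lminus_properties
    (W : ℝ → ℝ) (hW : ContDiff ℝ 2 W) (hWnn : ∀ t, 0 ≤ W t)
    (hWconv : ConvexOn ℝ Set.univ W) (hWvan : ∀ t, W t = 0 ↔ t = 0)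
    (hWint : IntegrableOn (fun u => 1 / Real.sqrt (W u)) {u : ℝ | 1 < |u|}) :
    (∀ h : ℝ, 0 < h →
      IntegrableOn (fun s => 1 / Real.sqrt (2 * (W s + h))) (Ioi (0:ℝ)) ∧
      IntegrableOn (fun s => 1 / Real.sqrt (2 * (W s + h))) (Iio (0:ℝ))) ∧
    ContinuousOn (fun h => ∫ s in Ioi (0:ℝ), 1 / Real.sqrt (2 * (W s + h))) (Ioi 0) ∧
    ContinuousOn (fun h => ∫ s in Iio (0:ℝ), 1 / Real.sqrt (2 * (W s + h))) (Ioi 0) ∧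
    StrictAntiOn (fun h => ∫ s in Ioi (0:ℝ), 1 / Real.sqrt (2 * (W s + h))) (Ioi 0) ∧
    StrictAntiOn (fun h => ∫ s in Iio (0:ℝ), 1 / Real.sqrt (2 * (W s + h))) (Ioi 0) ∧
    Tendsto (fun h => ∫ s in Ioi (0:ℝ), 1 / Real.sqrt (2 * (W s + h))) atTop (nhds 0) ∧
    Tendsto (fun h => ∫ s in Iio (0:ℝ), 1 / Real.sqrt (2 * (W s + h))) atTop (nhds 0) ∧
    Tendsto (fun h => ∫ s in Ioi (0:ℝ), 1 / Real.sqrt (2 * (W s + h))) (nhdsWithin 0 (Ioi 0)) atTop ∧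
    Tendsto (fun h => ∫ s in Iio (0:ℝ), 1 / Real.sqrt (2 * (W s + h))) (nhdsWithin 0 (Ioi 0)) atTop :=
  lplus_lminus_properties_general W hW hWnn hWvan hWint
end
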